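/- arXiv:2501.18814 — 4 statements merged into one kernel-verified Lean document; each statement's English description precedes it below -/
import Mathlib

section
/- Let n ≥ 2 be an integer, let K, a, b ≥ 0 and R > 0. Suppose f : (0, R] → ℝ is continuously differentiable, τ : [0, R] → ℝ is continuously differentiable with |τ(t)| ≤ a t + b for all t ∈ [0, R], t² f(t) → 0 as t → 0⁺, and f'(t) ≤ −(f(t) + τ'(t))²/(n − 1) + K for all t ∈ (0, R]. Then f(R) ≤ (n − 1 + 4b)/R + 3a + (K/3) R. -/
/-!
Multiply by `t²`: with `q = f + τ'`, the Riccati inequality and AM-GM (`2tq ≤ (tq)²/N + N`) give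
`(t² f)' + (2tτ)' - 2τ ≤ N + K t²`. Since `τ ≤ a t + b`, the function
`t² (f - a) + 2t (τ - b) - N t - K t³/3` is therefore nonincreasing on `(0, R]`; it tends to `0`
at `0⁺`, so it is `≤ 0` at `R`, and `-τ(R) ≤ a R + b` turns this into the bound on `f(R)`.
-/

open Set Filter Topology

theorem two_mul_mul_add_sq_mul_le {N K t q d : ℝ} (hN : 0 < N) (hd : d ≤ -q ^ 2 / N + K) :
    2 * t * q + t ^ 2 * d ≤ N + K * t ^ 2 := by
  have hsq : 0 ≤ (t * q - N) ^ 2 / N := by positivity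
  have hmul : t ^ 2 * d ≤ t ^ 2 * (-q ^ 2 / N + K) := mul_le_mul_of_nonneg_left hd (sq_nonneg t)
  have hdistrib : t ^ 2 * (-q ^ 2 / N + K) = -(t ^ 2 * (q ^ 2 / N)) + K * t ^ 2 := by ring
  have hexpand : (t * q - N) ^ 2 / N = t ^ 2 * (q ^ 2 / N) - 2 * t * q + N := by
    field_simp
    ring
  linarith

theorem le_of_tendsto_nhdsGT_of_hasDerivAt_nonpos {g g' : ℝ → ℝ} {a b L : ℝ} (hab : a < b)
    (hcont : ContinuousOn g (Ioc a b)) (hderiv : ∀ t ∈ Ioo a b, HasDerivAt g (g' t) t)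
    (hnonpos : ∀ t ∈ Ioo a b, g' t ≤ 0) (hlim : Tendsto g (𝓝[>] a) (𝓝 L)) : g b ≤ L := by
  have hanti : AntitoneOn g (Ioc a b) := by
    refine antitoneOn_of_hasDerivWithinAt_nonpos (f' := g') (convex_Ioc a b) hcont ?_ ?_ <;>
      rw [interior_Ioc]
    · exact fun t ht => (hderiv t ht).hasDerivWithinAt
    · exact hnonpos
  refine ge_of_tendsto hlim ?_
  filter_upwards [Ioc_mem_nhdsGT hab] with t ht
  exact hanti ht (right_mem_Ioc.2 hab) ht.2

noncomputable def riccatiComparison (N K a b : ℝ) (f τ : ℝ → ℝ) (t : ℝ) : ℝ :=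
  t ^ 2 * (f t - a) + 2 * t * (τ t - b) - N * t - K * t ^ 3 / 3

section riccatiComparison

variable {N K a b : ℝ} {f τ : ℝ → ℝ}

theorem hasDerivAt_riccatiComparison {t f' τ' : ℝ} (hf : HasDerivAt f f' t)
    (hτ : HasDerivAt τ τ' t) :
    HasDerivAt (riccatiComparison N K a b f τ)
      (2 * t * (f t + τ') + t ^ 2 * f' - N - K * t ^ 2 + 2 * (τ t - a * t - b)) t := by
  refine (((((hasDerivAt_pow 2 t).mul (hf.sub_const a)).add
    (((hasDerivAt_id t).const_mul 2).mul (hτ.sub_const b))).sub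
    ((hasDerivAt_id t).const_mul N)).sub
    (((hasDerivAt_pow 3 t).const_mul K).div_const 3)).congr_deriv ?_
  simp only [id_eq]
  norm_num
  ring

theorem tendsto_riccatiComparison_nhdsGT_zero
    (hf : Tendsto (fun t => t ^ 2 * f t) (𝓝[>] 0) (𝓝 0))
    (hτ : ContinuousWithinAt τ (Ioi 0) 0) :
    Tendsto (riccatiComparison N K a b f τ) (𝓝[>] 0) (𝓝 0) := by
  have hrest : ContinuousWithinAt
      (fun t => -(a * t ^ 2) + 2 * t * (τ t - b) - N * t - K * t ^ 3 / 3) (Ioi 0) 0 := by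
    fun_prop
  convert hf.add hrest.tendsto using 2 with t
  · simp only [riccatiComparison]
    ring
  · simp

theorem le_of_riccatiComparison_nonpos {R : ℝ} (hR : 0 < R)
    (hg : riccatiComparison N K a b f τ R ≤ 0) (hτR : -(a * R + b) ≤ τ R) :
    f R ≤ (N + 4 * b) / R + 3 * a + K / 3 * R := by
  have hsq : R ^ 2 * f R ≤ N * R + 3 * a * R ^ 2 + 4 * b * R + K * R ^ 3 / 3 := by
    have := mul_le_mul_of_nonneg_left hτR (by positivity : (0 : ℝ) ≤ 2 * R)
    unfold riccatiComparison at hg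
    nlinarith
  rw [show (N + 4 * b) / R + 3 * a + K / 3 * R
      = (N * R + 3 * a * R ^ 2 + 4 * b * R + K * R ^ 3 / 3) / R ^ 2 by field_simp; ring,
    le_div_iff₀ (by positivity)]
  linarith

end riccatiComparison

theorem riccati_comparison_general (n : ℕ) (hn : 2 ≤ n) (K a b R : ℝ)
    (hR : 0 < R)
    (f f' τ τ' : ℝ → ℝ)
    (hf : ∀ t ∈ Set.Ioc (0 : ℝ) R, HasDerivAt f (f' t) t)
    (hτ : ∀ t ∈ Set.Icc (0 : ℝ) R, HasDerivWithinAt τ (τ' t) (Set.Icc 0 R) t)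
    (hτbound : ∀ t ∈ Set.Icc (0 : ℝ) R, |τ t| ≤ a * t + b)
    (hlim : Tendsto (fun t => t ^ 2 * f t) (nhdsWithin 0 (Set.Ioi 0)) (nhds 0))
    (hric : ∀ t ∈ Set.Ioc (0 : ℝ) R,
      f' t ≤ -(f t + τ' t) ^ 2 / ((n : ℝ) - 1) + K) :
    f R ≤ ((n : ℝ) - 1 + 4 * b) / R + 3 * a + K / 3 * R := by
  have hN : (0 : ℝ) < n - 1 := by
    have : (2 : ℝ) ≤ n := by exact_mod_cast hn
    linarith
  have hτc : ContinuousOn τ (Icc 0 R) := fun t ht => (hτ t ht).continuousWithinAt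
  have hτ_at : ∀ t ∈ Ioo 0 R, HasDerivAt τ (τ' t) t := fun t ht =>
    (hτ t (Ioo_subset_Icc_self ht)).hasDerivAt (Icc_mem_nhds ht.1 ht.2)
  have hfc : ContinuousOn f (Ioc 0 R) := fun t ht => (hf t ht).continuousAt.continuousWithinAt
  have hgc : ContinuousOn (riccatiComparison (n - 1) K a b f τ) (Ioc 0 R) := by
    have hτc' : ContinuousOn τ (Ioc 0 R) := hτc.mono Ioc_subset_Icc_self
    unfold riccatiComparison
    fun_prop
  refine le_of_riccatiComparison_nonpos hR ?_ (neg_le_of_abs_le (hτbound R ⟨hR.le, le_rfl⟩))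
  refine le_of_tendsto_nhdsGT_of_hasDerivAt_nonpos hR hgc
    (fun t ht => hasDerivAt_riccatiComparison (hf t (Ioo_subset_Ioc_self ht)) (hτ_at t ht))
    (fun t ht => ?_) (tendsto_riccatiComparison_nhdsGT_zero hlim ?_)
  · have := two_mul_mul_add_sq_mul_le (t := t) hN (hric t (Ioo_subset_Ioc_self ht))
    linarith [le_abs_self (τ t), hτbound t (Ioo_subset_Icc_self ht)]
  · exact (hτc 0 (left_mem_Icc.2 hR.le)).mono_of_mem_nhdsWithin
      (mem_of_superset (Ioc_mem_nhdsGT hR) Ioc_subset_Icc_self)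

/-- One-dimensional Riccati comparison inequality (the analytic core of the Laplacian
comparison theorem, Theorem 3.1 of the paper): if `f` on `(0,R]` satisfies
`f' ≤ -(f + τ')²/(n-1) + K` with `t² f(t) → 0` as `t → 0⁺` and the distortion `τ` has
linear growth `|τ(t)| ≤ a t + b`, then `f(R) ≤ (n-1+4b)/R + 3a + (K/3) R`. -/
theorem riccati_comparison (n : ℕ) (hn : 2 ≤ n) (K a b R : ℝ)
    (hK : 0 ≤ K) (ha : 0 ≤ a) (hb : 0 ≤ b) (hR : 0 < R)
    (f f' τ τ' : ℝ → ℝ)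
    (hf : ∀ t ∈ Set.Ioc (0 : ℝ) R, HasDerivAt f (f' t) t)
    (hf'cont : ContinuousOn f' (Set.Ioc 0 R))
    (hτ : ∀ t ∈ Set.Icc (0 : ℝ) R, HasDerivWithinAt τ (τ' t) (Set.Icc 0 R) t)
    (hτ'cont : ContinuousOn τ' (Set.Icc 0 R))
    (hτbound : ∀ t ∈ Set.Icc (0 : ℝ) R, |τ t| ≤ a * t + b)
    (hlim : Tendsto (fun t => t ^ 2 * f t) (nhdsWithin 0 (Set.Ioi 0)) (nhds 0))
    (hric : ∀ t ∈ Set.Ioc (0 : ℝ) R,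
      f' t ≤ -(f t + τ' t) ^ 2 / ((n : ℝ) - 1) + K) :
    f R ≤ ((n : ℝ) - 1 + 4 * b) / R + 3 * a + K / 3 * R :=
  riccati_comparison_general n hn K a b R hR f f' τ τ' hf hτ hτbound hlim hric
end

section
/- Let (Θ, μ) be a measure space, R > 0, and let c ≥ 1 and a, K ≥ 0 be constants. For each t ∈ (0, R) let D(t) ⊆ Θ be a measurable set such that D(t) ⊆ D(s) whenever 0 < s ≤ t < R. Let σ : (0, R) × Θ → [0, ∞) be measurable, integrable on (0, r) × Θ for each r < R, and suppose that for all 0 < s < t < R and all θ ∈ D(t), σ(t, θ) s^{c} ≤ t^{c} σ(s, θ) e^{3a(t − s) + (K/6)(t² − s²)}. Define V(r) := ∫₀^{r} (∫_{D(t)} σ(t, θ) dμ(θ)) dt. Then for all 0 < r₁ < r₂ < R with V(r₁) > 0, V(r₂)/V(r₁) ≤ (r₂/r₁)^{c+1} · e^{3a r₂ + (K/6) r₂²}. -/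
/-!
Put `l = r₂ / r₁` and `g(t) = ∫_{D(t)} σ(t, ·) dμ`. For `0 < s < r₁` the point `t = l s` lies in
`(s, r₂)`, so the density hypothesis together with `D(t) ⊆ D(s)` gives
`g(l s) ≤ l^c e^{3a r₂ + (K/6) r₂²} g(s)`. Substituting `t = l s` in `V(r₂) = ∫₀^{l r₁} g` costs one
more factor `l`, whence `V(r₂) ≤ l^{c+1} e^{3a r₂ + (K/6) r₂²} V(r₁)`.
-/

open MeasureTheory Set ENNReal

lemma setLIntegral_Ioo_mul_left (f : ℝ → ℝ≥0∞) {l : ℝ} (hl : 0 < l) (b c : ℝ) :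
    ∫⁻ t in Ioo (l * b) (l * c), f t = ENNReal.ofReal l * ∫⁻ s in Ioo b c, f (l * s) := by
  have hderiv : ∀ x ∈ Ioo b c, HasDerivWithinAt (l * ·) l (Ioo b c) x := fun x _ => by
    simpa using ((hasDerivAt_id x).const_mul l).hasDerivWithinAt
  rw [← image_mul_left_Ioo hl, lintegral_image_eq_lintegral_abs_deriv_mul measurableSet_Ioo
    hderiv (mul_right_injective₀ hl.ne').injOn, abs_of_pos hl,
    lintegral_const_mul' _ _ ofReal_ne_top]

lemma setLIntegral_Ioo_zero_mul_left_le {g : ℝ → ℝ≥0∞} {l r : ℝ} {C : ℝ≥0∞} (hl : 0 < l)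
    (hC : C ≠ ⊤) (hg : ∀ s ∈ Ioo 0 r, g (l * s) ≤ C * g s) :
    ∫⁻ t in Ioo 0 (l * r), g t ≤ ENNReal.ofReal l * C * ∫⁻ s in Ioo 0 r, g s := by
  calc ∫⁻ t in Ioo 0 (l * r), g t = ENNReal.ofReal l * ∫⁻ s in Ioo 0 r, g (l * s) := by
        simpa only [mul_zero] using setLIntegral_Ioo_mul_left g hl 0 r
    _ ≤ ENNReal.ofReal l * ∫⁻ s in Ioo 0 r, C * g s :=
        mul_le_mul_right (setLIntegral_mono' measurableSet_Ioo hg) _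
    _ = ENNReal.ofReal l * C * ∫⁻ s in Ioo 0 r, g s := by
        rw [lintegral_const_mul' _ _ hC, mul_assoc]

lemma setLIntegral_le_const_mul_of_subset {Θ : Type*} [MeasurableSpace Θ] {μ : Measure Θ}
    {A B : Set Θ} {f g : Θ → ℝ≥0∞} {C : ℝ≥0∞} (hA : MeasurableSet A) (hAB : A ⊆ B)
    (hC : C ≠ ⊤) (h : ∀ θ ∈ A, f θ ≤ C * g θ) :
    ∫⁻ θ in A, f θ ∂μ ≤ C * ∫⁻ θ in B, g θ ∂μ :=
  calc ∫⁻ θ in A, f θ ∂μ ≤ ∫⁻ θ in A, C * g θ ∂μ := setLIntegral_mono' hA h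
    _ ≤ ∫⁻ θ in B, C * g θ ∂μ := lintegral_mono_set hAB
    _ = C * ∫⁻ θ in B, g θ ∂μ := lintegral_const_mul' _ _ hC

lemma exp_distortion_le {a K s t r : ℝ} (ha : 0 ≤ a) (hK : 0 ≤ K) (hs : 0 ≤ s) (hst : s ≤ t)
    (htr : t ≤ r) :
    Real.exp (3 * a * (t - s) + K / 6 * (t ^ 2 - s ^ 2)) ≤ Real.exp (3 * a * r + K / 6 * r ^ 2) := by
  have hlin : t - s ≤ r := by linarith
  have hquad : t ^ 2 - s ^ 2 ≤ r ^ 2 := by nlinarith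
  gcongr

lemma setLIntegral_density_le {Θ : Type*} [MeasurableSpace Θ] (μ : Measure Θ) {R c a K : ℝ}
    (ha : 0 ≤ a) (hK : 0 ≤ K) {D : ℝ → Set Θ} (hDmeas : ∀ t, MeasurableSet (D t))
    (hDmono : ∀ s t : ℝ, 0 < s → s ≤ t → t < R → D t ⊆ D s) {σ : ℝ → Θ → ℝ≥0∞}
    (hpt : ∀ s t : ℝ, 0 < s → s < t → t < R → ∀ θ ∈ D t,
      σ t θ * ENNReal.ofReal (s ^ c) ≤
        ENNReal.ofReal (t ^ c) * σ s θ *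
          ENNReal.ofReal (Real.exp (3 * a * (t - s) + K / 6 * (t ^ 2 - s ^ 2))))
    {s t r : ℝ} (hs : 0 < s) (hst : s < t) (htr : t ≤ r) (hr : r < R) :
    ∫⁻ θ in D t, σ t θ ∂μ ≤
      ENNReal.ofReal ((t / s) ^ c * Real.exp (3 * a * r + K / 6 * r ^ 2)) *
        ∫⁻ θ in D s, σ s θ ∂μ := by
  set E := Real.exp (3 * a * r + K / 6 * r ^ 2)
  have htR : t < R := htr.trans_lt hr
  refine setLIntegral_le_const_mul_of_subset (hDmeas t) (hDmono s t hs hst.le htR)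
    ofReal_ne_top fun θ hθ => ?_
  have hsc : 0 < s ^ c := Real.rpow_pos_of_pos hs c
  have hratio : t ^ c = (t / s) ^ c * s ^ c := by
    rw [Real.div_rpow (hs.trans hst).le hs.le, div_mul_cancel₀ _ hsc.ne']
  rw [← ENNReal.mul_le_mul_iff_left (ofReal_pos.2 hsc).ne' ofReal_ne_top]
  calc σ t θ * ENNReal.ofReal (s ^ c)
      ≤ ENNReal.ofReal (t ^ c) * σ s θ *
          ENNReal.ofReal (Real.exp (3 * a * (t - s) + K / 6 * (t ^ 2 - s ^ 2))) :=
        hpt s t hs hst htR θ hθ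
    _ ≤ ENNReal.ofReal (t ^ c) * σ s θ * ENNReal.ofReal E := by
        gcongr
        exact exp_distortion_le ha hK hs.le hst.le htr
    _ = ENNReal.ofReal ((t / s) ^ c * E) * σ s θ * ENNReal.ofReal (s ^ c) := by
        have hpow : 0 ≤ (t / s) ^ c := (Real.rpow_pos_of_pos (div_pos (hs.trans hst) hs) c).le
        rw [hratio, ofReal_mul hpow, ofReal_mul hpow]
        ring

theorem volume_comparison_core_general {Θ : Type*} [MeasurableSpace Θ] (μ : Measure Θ)
    (R c a K : ℝ) (ha : 0 ≤ a) (hK : 0 ≤ K)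
    (D : ℝ → Set Θ) (hDmeas : ∀ t, MeasurableSet (D t))
    (hDmono : ∀ s t : ℝ, 0 < s → s ≤ t → t < R → D t ⊆ D s)
    (σ : ℝ → Θ → ℝ≥0∞)
    (hpt : ∀ s t : ℝ, 0 < s → s < t → t < R → ∀ θ ∈ D t,
      σ t θ * ENNReal.ofReal (s ^ c) ≤
        ENNReal.ofReal (t ^ c) * σ s θ *
          ENNReal.ofReal (Real.exp (3 * a * (t - s) + K / 6 * (t ^ 2 - s ^ 2))))
    (V : ℝ → ℝ≥0∞)
    (hV : ∀ r : ℝ, V r = ∫⁻ t in Set.Ioo (0 : ℝ) r, ∫⁻ θ in D t, σ t θ ∂μ)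
    (r₁ r₂ : ℝ) (h1 : 0 < r₁) (h12 : r₁ < r₂) (h2 : r₂ < R) :
    V r₂ / V r₁ ≤
      ENNReal.ofReal ((r₂ / r₁) ^ (c + 1) * Real.exp (3 * a * r₂ + K / 6 * r₂ ^ 2)) := by
  set l := r₂ / r₁
  set E := Real.exp (3 * a * r₂ + K / 6 * r₂ ^ 2)
  have hl : 1 < l := (one_lt_div h1).2 h12
  have hl₀ : 0 < l := one_pos.trans hl
  have hr₂ : r₂ = l * r₁ := (div_mul_cancel₀ _ h1.ne').symm
  have hdilate : ∀ s ∈ Ioo 0 r₁, ∫⁻ θ in D (l * s), σ (l * s) θ ∂μ ≤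
      ENNReal.ofReal (l ^ c * E) * ∫⁻ θ in D s, σ s θ ∂μ := fun s ⟨hs, hsr⟩ => by
    simpa only [mul_div_cancel_right₀ _ hs.ne'] using
      setLIntegral_density_le μ ha hK hDmeas hDmono hpt hs (lt_mul_left hs hl)
        (hr₂ ▸ (mul_lt_mul_iff_right₀ hl₀).2 hsr).le h2
  refine div_le_of_le_mul ?_
  calc V r₂ ≤ ENNReal.ofReal l * ENNReal.ofReal (l ^ c * E) * V r₁ := by
        rw [hV, hV, hr₂]
        exact setLIntegral_Ioo_zero_mul_left_le hl₀ ofReal_ne_top hdilate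
    _ = ENNReal.ofReal (l ^ (c + 1) * E) * V r₁ := by
        rw [← ofReal_mul hl₀.le, Real.rpow_add_one hl₀.ne', mul_left_comm, mul_assoc]

/-- Integration lemma at the core of the volume comparison theorem (Theorem 3.2 of the
paper): if the polar density `σ(t,θ)` satisfies
`σ(t,θ) s^c ≤ t^c σ(s,θ) e^{3a(t-s) + (K/6)(t²-s²)}` for `0 < s < t < R` and `θ ∈ D(t)`,
with the direction sets `D(t)` shrinking in `t`, then the ball volumes
`V(r) = ∫₀^r ∫_{D(t)} σ dμ dt` satisfy
`V(r₂)/V(r₁) ≤ (r₂/r₁)^(c+1) e^{3a r₂ + (K/6) r₂²}`. -/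
theorem volume_comparison_core {Θ : Type*} [MeasurableSpace Θ] (μ : Measure Θ)
    (R c a K : ℝ) (hR : 0 < R) (hc : 1 ≤ c) (ha : 0 ≤ a) (hK : 0 ≤ K)
    (D : ℝ → Set Θ) (hDmeas : ∀ t, MeasurableSet (D t))
    (hDmono : ∀ s t : ℝ, 0 < s → s ≤ t → t < R → D t ⊆ D s)
    (σ : ℝ → Θ → ℝ≥0∞) (hσ : Measurable (Function.uncurry σ))
    (hint : ∀ r ∈ Set.Ioo (0 : ℝ) R, (∫⁻ t in Set.Ioo (0 : ℝ) r, ∫⁻ θ, σ t θ ∂μ) < ⊤)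
    (hpt : ∀ s t : ℝ, 0 < s → s < t → t < R → ∀ θ ∈ D t,
      σ t θ * ENNReal.ofReal (s ^ c) ≤
        ENNReal.ofReal (t ^ c) * σ s θ *
          ENNReal.ofReal (Real.exp (3 * a * (t - s) + K / 6 * (t ^ 2 - s ^ 2))))
    (V : ℝ → ℝ≥0∞)
    (hV : ∀ r : ℝ, V r = ∫⁻ t in Set.Ioo (0 : ℝ) r, ∫⁻ θ in D t, σ t θ ∂μ)
    (r₁ r₂ : ℝ) (h1 : 0 < r₁) (h12 : r₁ < r₂) (h2 : r₂ < R) (hV1 : 0 < V r₁) :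
    V r₂ / V r₁ ≤
      ENNReal.ofReal ((r₂ / r₁) ^ (c + 1) * Real.exp (3 * a * r₂ + K / 6 * r₂ ^ 2)) :=
  volume_comparison_core_general μ R c a K ha hK D hDmeas hDmono σ hpt V hV r₁ r₂ h1 h12 h2
end

section
/- Let (X, m) be a measure space, δ ∈ (0, 1), ν > 2, set t := 1 + 2/ν, and let D > 0. Let {B_σ}_{σ ∈ [δ,1]} be measurable subsets of X with B_{σ'} ⊆ B_σ whenever σ' ≤ σ. Let u : X → [0, ∞) be measurable and suppose that for all δ ≤ σ' < σ ≤ 1 and all s ≥ 1, ∫_{B_{σ'}} u^{2st} dm ≤ (D s² / (σ − σ')²) · (∫_{B_σ} u^{2s} dm)^{t}. Then there is a constant C(ν) depending only on ν such that ess sup_{B_δ} u² ≤ C(ν) · D^{ν/2} · (1 − δ)^{−ν} · ∫_{B_1} u² dm. -/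
/-!
Along the radii `σ_k = δ + (1 - δ) / 2 ^ k`, the reverse-Hölder inequality with `s = t ^ k`
shows that `I_k = ∫_{B_{σ_k}} u ^ (2 t ^ k)` satisfies `I_{k+1} ≤ K (4 t²) ^ k I_k ^ t` with
`K = 4 D / (1 - δ)²`. Iterating, `I_k ^ (t ^ -k) ≤ K ^ (∑ t ^ -j) (4 t²) ^ (∑ j t ^ -j) I_0`, and
the two exponent series are `1 / (t - 1) = ν / 2` and at most its square. Since `B_δ ⊆ B_{σ_k}`,
`I_k ^ (t ^ -k)` dominates the `L^(t ^ k)` norm of `u²` on `B_δ`, and by Chebyshev's inequality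
these norms have limit inferior at least `ess sup_{B_δ} u²`.
-/

open MeasureTheory Set ENNReal Filter Topology Finset

theorem mul_meas_ge_rpow_inv_le_lintegral_rpow_rpow_inv {α : Type*} [MeasurableSpace α]
    {μ : Measure α} {f : α → ℝ≥0∞} (hf : AEMeasurable f μ) (a : ℝ≥0∞) {p : ℝ} (hp : 0 < p) :
    a * μ {x | a ≤ f x} ^ p⁻¹ ≤ (∫⁻ x, f x ^ p ∂μ) ^ p⁻¹ := by
  have hmarkov := mul_meas_ge_le_lintegral₀ (hf.pow_const p) (a ^ p)
  simp only [ENNReal.rpow_le_rpow_iff hp] at hmarkov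
  calc a * μ {x | a ≤ f x} ^ p⁻¹ = (a ^ p * μ {x | a ≤ f x}) ^ p⁻¹ := by
        rw [ENNReal.mul_rpow_of_nonneg _ _ (inv_nonneg.2 hp.le), ← ENNReal.rpow_mul,
          mul_inv_cancel₀ hp.ne', ENNReal.rpow_one]
    _ ≤ _ := ENNReal.rpow_le_rpow hmarkov (inv_nonneg.2 hp.le)

theorem essSup_le_liminf_lintegral_rpow {α ι : Type*} [MeasurableSpace α] {μ : Measure α}
    {f : α → ℝ≥0∞} (hf : AEMeasurable f μ) {l : Filter ι} [l.NeBot] {p : ι → ℝ}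
    (hp : Tendsto p l atTop) :
    essSup f μ ≤ liminf (fun i => (∫⁻ x, f x ^ p i ∂μ) ^ (p i)⁻¹) l := by
  refine le_of_forall_lt_imp_le_of_dense fun a ha => ?_
  have hpos : μ {x | a < f x} ≠ 0 := fun h =>
    ha.not_ge (essSup_le_of_ae_le a (ae_iff.2 (by simpa only [not_le] using h)))
  obtain ⟨b, hb0, hb⟩ := ENNReal.lt_iff_exists_nnreal_btwn.1 (pos_iff_ne_zero.2 hpos)
  have hb_le : (b : ℝ≥0∞) ≤ μ {x | a ≤ f x} :=
    hb.le.trans (measure_mono fun _ hx => le_of_lt (a := a) hx)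
  have hroot : Tendsto (fun i => ((b ^ (p i)⁻¹ : NNReal) : ℝ≥0∞)) l (𝓝 1) := by
    have := tendsto_const_nhds.nnrpow (tendsto_inv_atTop_zero.comp hp)
      (Or.inl (ENNReal.coe_pos.1 hb0).ne')
    simpa using ENNReal.tendsto_coe.2 this
  have hlower : ∀ᶠ i in l, a * ((b ^ (p i)⁻¹ : NNReal) : ℝ≥0∞) ≤
      (∫⁻ x, f x ^ p i ∂μ) ^ (p i)⁻¹ := by
    filter_upwards [hp.eventually_gt_atTop 0] with i hi
    rw [ENNReal.coe_rpow_of_ne_zero (ENNReal.coe_pos.1 hb0).ne']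
    exact (mul_le_mul_right (ENNReal.rpow_le_rpow hb_le (inv_nonneg.2 hi.le)) a).trans
      (mul_meas_ge_rpow_inv_le_lintegral_rpow_rpow_inv hf a hi)
  calc a = liminf (fun i => a * ((b ^ (p i)⁻¹ : NNReal) : ℝ≥0∞)) l := by
        simpa using ((ENNReal.Tendsto.const_mul hroot (Or.inl one_ne_zero)).liminf_eq).symm
    _ ≤ _ := liminf_le_liminf hlower

theorem rpow_inv_pow_le_of_le_mul_rpow {a : ℕ → ℝ≥0∞} {t K r : ℝ} (ht : 0 < t) (hK : 0 < K)
    (hr : 0 < r) (h : ∀ k, a (k + 1) ≤ ENNReal.ofReal (K * r ^ k) * a k ^ t) (k : ℕ) :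
    a k ^ t⁻¹ ^ k ≤ ENNReal.ofReal (K ^ (∑ j ∈ range k, t⁻¹ ^ (j + 1)) *
      r ^ (∑ j ∈ range k, (j : ℝ) * t⁻¹ ^ (j + 1))) * a 0 := by
  induction k with
  | zero => simp
  | succ n ih =>
    have hKr : 0 < K * r ^ n := by positivity
    have he : 0 ≤ t⁻¹ ^ (n + 1) := by positivity
    calc a (n + 1) ^ t⁻¹ ^ (n + 1)
        ≤ (ENNReal.ofReal (K * r ^ n) * a n ^ t) ^ t⁻¹ ^ (n + 1) := ENNReal.rpow_le_rpow (h n) he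
      _ = ENNReal.ofReal ((K * r ^ n) ^ t⁻¹ ^ (n + 1)) * a n ^ t⁻¹ ^ n := by
          rw [ENNReal.mul_rpow_of_nonneg _ _ he, ENNReal.ofReal_rpow_of_pos hKr,
            ← ENNReal.rpow_mul, pow_succ', ← mul_assoc, mul_inv_cancel₀ ht.ne', one_mul]
      _ ≤ ENNReal.ofReal ((K * r ^ n) ^ t⁻¹ ^ (n + 1)) *
            (ENNReal.ofReal (K ^ (∑ j ∈ range n, t⁻¹ ^ (j + 1)) *
              r ^ (∑ j ∈ range n, (j : ℝ) * t⁻¹ ^ (j + 1))) * a 0) := mul_le_mul_right ih _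
      _ = _ := by
          rw [← mul_assoc, ← ENNReal.ofReal_mul (by positivity), sum_range_succ, sum_range_succ,
            Real.mul_rpow hK.le (by positivity), ← Real.rpow_natCast r n, ← Real.rpow_mul hr.le,
            Real.rpow_add hK, Real.rpow_add hr]
          ring_nf

theorem hasSum_inv_pow_succ {t : ℝ} (ht : 1 < t) :
    HasSum (fun j : ℕ => t⁻¹ ^ (j + 1)) (t - 1)⁻¹ := by
  have hx : t⁻¹ < 1 := inv_lt_one_of_one_lt₀ ht
  have hval : t⁻¹ * (1 - t⁻¹)⁻¹ = (t - 1)⁻¹ := by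
    have : t - 1 ≠ 0 := by linarith
    field_simp
  rw [← hval]
  simpa only [pow_succ'] using (hasSum_geometric_of_lt_one (by positivity) hx).mul_left t⁻¹

theorem sum_range_mul_inv_pow_succ_le {t : ℝ} (ht : 1 < t) (k : ℕ) :
    ∑ j ∈ range k, (j : ℝ) * t⁻¹ ^ (j + 1) ≤ (t - 1)⁻¹ ^ 2 := by
  have hx : ‖t⁻¹‖ < 1 := by
    rw [Real.norm_of_nonneg (by positivity)]; exact inv_lt_one_of_one_lt₀ ht
  have hsum := (hasSum_coe_mul_geometric_of_norm_lt_one hx).mul_left t⁻¹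
  have hval : t⁻¹ * (t⁻¹ / (1 - t⁻¹) ^ 2) = (t - 1)⁻¹ ^ 2 := by
    have : t - 1 ≠ 0 := by linarith
    field_simp
  calc ∑ j ∈ range k, (j : ℝ) * t⁻¹ ^ (j + 1) = ∑ j ∈ range k, t⁻¹ * (j * t⁻¹ ^ j) :=
        sum_congr rfl fun j _ => by ring
    _ ≤ _ := hval ▸ sum_le_hasSum (range k) (fun j _ => by positivity) hsum

theorem limsup_rpow_inv_pow_le {a : ℕ → ℝ≥0∞} {t K r : ℝ} (ht : 1 < t) (hK : 0 < K)
    (hr : 1 ≤ r) (h : ∀ k, a (k + 1) ≤ ENNReal.ofReal (K * r ^ k) * a k ^ t) :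
    limsup (fun k => a k ^ t⁻¹ ^ k) atTop ≤
      ENNReal.ofReal (K ^ (t - 1)⁻¹ * r ^ ((t - 1)⁻¹ ^ 2)) * a 0 := by
  set P : ℕ → ℝ := fun k => ∑ j ∈ range k, t⁻¹ ^ (j + 1)
  have hbound : ∀ k, a k ^ t⁻¹ ^ k ≤ ENNReal.ofReal (K ^ P k * r ^ ((t - 1)⁻¹ ^ 2)) * a 0 :=
    fun k => (rpow_inv_pow_le_of_le_mul_rpow (by linarith) hK (by linarith) h k).trans <|
      mul_le_mul_left (ENNReal.ofReal_le_ofReal <| mul_le_mul_of_nonneg_left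
        (Real.rpow_le_rpow_of_exponent_le hr (sum_range_mul_inv_pow_succ_le ht k))
        (by positivity)) _
  have hlim : Tendsto (fun k => ENNReal.ofReal (K ^ P k * r ^ ((t - 1)⁻¹ ^ 2)) * a 0) atTop
      (𝓝 (ENNReal.ofReal (K ^ (t - 1)⁻¹ * r ^ ((t - 1)⁻¹ ^ 2)) * a 0)) := by
    refine ENNReal.Tendsto.mul_const (ENNReal.tendsto_ofReal (Tendsto.mul_const _ ?_))
      (Or.inl (ENNReal.ofReal_pos.2 (by positivity)).ne')
    exact tendsto_const_nhds.rpow (hasSum_inv_pow_succ ht).tendsto_sum_nat (Or.inl hK.ne')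
  exact (limsup_le_limsup (Eventually.of_forall hbound)).trans hlim.limsup_eq.le

noncomputable def moserRadius (δ : ℝ) (k : ℕ) : ℝ := δ + (1 - δ) / 2 ^ k

@[simp] theorem moserRadius_zero (δ : ℝ) : moserRadius δ 0 = 1 := by simp [moserRadius]

theorem le_moserRadius {δ : ℝ} (hδ : δ ≤ 1) (k : ℕ) : δ ≤ moserRadius δ k := by
  have : 0 ≤ (1 - δ) / 2 ^ k := div_nonneg (by linarith) (by positivity)
  unfold moserRadius; linarith

theorem moserRadius_le_one {δ : ℝ} (hδ : δ ≤ 1) (k : ℕ) : moserRadius δ k ≤ 1 := by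
  have : (1 - δ) / 2 ^ k ≤ 1 - δ := div_le_self (by linarith) (one_le_pow₀ one_le_two)
  unfold moserRadius; linarith

theorem moserRadius_sub_succ (δ : ℝ) (k : ℕ) :
    moserRadius δ k - moserRadius δ (k + 1) = (1 - δ) / 2 ^ (k + 1) := by
  unfold moserRadius; rw [pow_succ]; ring

theorem moserRadius_succ_lt {δ : ℝ} (hδ : δ < 1) (k : ℕ) :
    moserRadius δ (k + 1) < moserRadius δ k := by
  have := moserRadius_sub_succ δ k
  have : 0 < (1 - δ) / 2 ^ (k + 1) := div_pos (by linarith) (by positivity)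
  linarith

theorem lintegral_rpow_moserRadius_succ_le {X : Type*} [MeasurableSpace X] {m : Measure X}
    {B : ℝ → Set X} {u : X → ℝ≥0∞} {δ D t : ℝ} (hδ : δ < 1) (ht : 1 ≤ t)
    (hineq : ∀ σ' σ : ℝ, δ ≤ σ' → σ' < σ → σ ≤ 1 → ∀ s : ℝ, 1 ≤ s →
      ∫⁻ x in B σ', u x ^ (2 * s * t) ∂m ≤
        ENNReal.ofReal (D * s ^ 2 / (σ - σ') ^ 2) * (∫⁻ x in B σ, u x ^ (2 * s) ∂m) ^ t)
    (k : ℕ) :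
    ∫⁻ x in B (moserRadius δ (k + 1)), u x ^ (2 * t ^ (k + 1)) ∂m ≤
      ENNReal.ofReal (4 * D / (1 - δ) ^ 2 * (4 * t ^ 2) ^ k) *
        (∫⁻ x in B (moserRadius δ k), u x ^ (2 * t ^ k) ∂m) ^ t := by
  have hcoef : D * (t ^ k) ^ 2 / ((1 - δ) / 2 ^ (k + 1)) ^ 2 =
      4 * D / (1 - δ) ^ 2 * (4 * t ^ 2) ^ k := by
    have : 1 - δ ≠ 0 := by linarith
    have h4 : (4 : ℝ) ^ k = 2 ^ (k * 2) := by rw [pow_mul']; norm_num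
    field_simp
    rw [mul_pow, h4]
    ring
  have h := hineq _ _ (le_moserRadius hδ.le (k + 1)) (moserRadius_succ_lt hδ k)
    (moserRadius_le_one hδ.le k) (t ^ k) (one_le_pow₀ ht)
  rwa [moserRadius_sub_succ, hcoef, mul_assoc, ← pow_succ] at h

theorem mul_div_sq_rpow_half {c D b : ℝ} (p : ℝ) (hc : 0 ≤ c) (hD : 0 ≤ D) (hb : 0 < b) :
    (c * D / b ^ 2) ^ (p / 2) = c ^ (p / 2) * D ^ (p / 2) * b ^ (-p) := by
  rw [Real.div_rpow (by positivity) (by positivity), Real.mul_rpow hc hD,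
    ← Real.rpow_two, ← Real.rpow_mul hb.le, show (2 : ℝ) * (p / 2) = p by ring,
    Real.rpow_neg hb.le, div_eq_mul_inv]

/-- Abstract Moser iteration (the iteration step in the proof of the `L^p` mean value
inequality, Theorem 4.3 of the paper): if a nonnegative measurable function `u` on nested
sets `B_σ`, `δ ≤ σ ≤ 1`, satisfies the reverse-Hölder family of inequalities
`∫_{B_{σ'}} u^{2st} ≤ (D s²/(σ-σ')²) (∫_{B_σ} u^{2s})^t` with `t = 1 + 2/ν`, then
`ess sup_{B_δ} u² ≤ C(ν) D^{ν/2} (1-δ)^{-ν} ∫_{B_1} u²`, with `C(ν)` depending only on `ν`. -/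
theorem moser_iteration (ν : ℝ) (hν : 2 < ν) :
    ∃ C : ℝ, 0 < C ∧
      ∀ (X : Type) (_ : MeasurableSpace X) (m : Measure X) (δ D : ℝ) (B : ℝ → Set X)
        (u : X → ℝ≥0∞),
        0 < δ → δ < 1 → 0 < D →
        (∀ σ ∈ Set.Icc δ (1 : ℝ), MeasurableSet (B σ)) →
        (∀ σ' σ : ℝ, δ ≤ σ' → σ' ≤ σ → σ ≤ 1 → B σ' ⊆ B σ) →
        Measurable u →
        (∀ σ' σ : ℝ, δ ≤ σ' → σ' < σ → σ ≤ 1 → ∀ s : ℝ, 1 ≤ s →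
          (∫⁻ x in B σ', u x ^ (2 * s * (1 + 2 / ν)) ∂m) ≤
            ENNReal.ofReal (D * s ^ 2 / (σ - σ') ^ 2) *
              (∫⁻ x in B σ, u x ^ (2 * s) ∂m) ^ (1 + 2 / ν)) →
        essSup (fun x => u x ^ (2 : ℝ)) (m.restrict (B δ)) ≤
          ENNReal.ofReal (C * D ^ (ν / 2) * (1 - δ) ^ (-ν)) *
            ∫⁻ x in B 1, u x ^ (2 : ℝ) ∂m := by
  have hν0 : 0 < ν := by linarith
  have ht : 1 < 1 + 2 / ν := lt_add_of_pos_right 1 (by positivity)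
  have hexp : (1 + 2 / ν - 1)⁻¹ = ν / 2 := by rw [add_sub_cancel_left, inv_div]
  refine ⟨4 ^ (ν / 2) * (4 * (1 + 2 / ν) ^ 2) ^ ((ν / 2) ^ 2), by positivity, ?_⟩
  intro X _ m δ D B u _ hδ1 hD _ hBnest hu hineq
  have h1δ : 0 < 1 - δ := by linarith
  set t := 1 + 2 / ν
  set I : ℕ → ℝ≥0∞ := fun k => ∫⁻ x in B (moserRadius δ k), u x ^ (2 * t ^ k) ∂m
  have hstep : ∀ k, (∫⁻ x in B δ, (u x ^ (2 : ℝ)) ^ t ^ k ∂m) ^ (t ^ k)⁻¹ ≤ I k ^ t⁻¹ ^ k := by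
    intro k
    simp_rw [← ENNReal.rpow_mul, inv_pow]
    exact ENNReal.rpow_le_rpow (lintegral_mono_set (hBnest _ _ le_rfl
      (le_moserRadius hδ1.le k) (moserRadius_le_one hδ1.le k))) (by positivity)
  calc essSup (fun x => u x ^ (2 : ℝ)) (m.restrict (B δ))
      ≤ liminf (fun k => (∫⁻ x in B δ, (u x ^ (2 : ℝ)) ^ t ^ k ∂m) ^ (t ^ k)⁻¹) atTop :=
        essSup_le_liminf_lintegral_rpow (hu.pow_const _).aemeasurable
          (tendsto_pow_atTop_atTop_of_one_lt ht)
    _ ≤ liminf (fun k => I k ^ t⁻¹ ^ k) atTop := liminf_le_liminf (Eventually.of_forall hstep)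
    _ ≤ limsup (fun k => I k ^ t⁻¹ ^ k) atTop := liminf_le_limsup
    _ ≤ ENNReal.ofReal ((4 * D / (1 - δ) ^ 2) ^ (t - 1)⁻¹ * (4 * t ^ 2) ^ ((t - 1)⁻¹ ^ 2)) *
          I 0 :=
        limsup_rpow_inv_pow_le ht (by positivity) (by nlinarith)
          (lintegral_rpow_moserRadius_succ_le hδ1 ht.le hineq)
    _ = _ := by
        rw [hexp, mul_div_sq_rpow_half ν (by norm_num) hD.le h1δ]
        simp only [I, moserRadius_zero, pow_zero, mul_one]
        ring_nf
end

section
/- Let (X, m) be a measure space, δ ∈ (0, 1), ν > 0, E > 0 and p ∈ (0, 2). Let {B_σ}_{σ ∈ [δ,1]} be measurable subsets of X with B_{σ'} ⊆ B_σ whenever σ' ≤ σ, and let u : X → [0, ∞) be measurable with ess sup_{B_1} u < ∞. Suppose that for all δ ≤ σ' < σ ≤ 1, ess sup_{B_{σ'}} u² ≤ E (σ − σ')^{−ν} ∫_{B_σ} u² dm. Then ess sup_{B_δ} u^{p} ≤ 2^{2ν/p} · E · (1 − δ)^{−ν} · ∫_{B_1} u^{p} dm. -/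
open MeasureTheory Set ENNReal

/-!
Interpolation, `∫ u² ≤ (ess sup u)^(2-p) ∫ u^p`, turns the hypothesis into
`g(σ')² ≤ E I (σ - σ')^(-ν) g(σ)^(2-p)` for `g(σ) = ess sup_{B_σ} u` and `I = ∫_{B_1} u^p`.
Instead of iterating along radii `σₖ ↑ 1`, weight `g` by `(1 - σ)^(ν/p)`, the exponent for which the
powers of `1 - σ` cancel when `σ'` is compared with the midpoint `σ = (σ' + 1)/2`. The supremum `Ψ`
of the weighted function over `[δ, 1)` is finite since `u` is bounded on `B_1`, and the comparison
gives `Ψ² ≤ 2^(2ν/p) E I Ψ^(2-p)`, hence `Ψ^p ≤ 2^(2ν/p) E I`; evaluating the weight at `δ`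
concludes.
-/

namespace ENNReal

theorem essSup_rpow {α : Type*} [MeasurableSpace α] {μ : Measure α} (u : α → ℝ≥0∞) {r : ℝ}
    (hr : 0 < r) : essSup (fun x => u x ^ r) μ = essSup u μ ^ r :=
  ((orderIsoRpow r hr).essSup_apply u μ).symm

theorem lintegral_rpow_le_essSup_rpow_mul {α : Type*} [MeasurableSpace α] {μ : Measure α}
    {u : α → ℝ≥0∞} {p q : ℝ} (hp : 0 ≤ p) (hpq : p ≤ q) (hu : essSup u μ ≠ ⊤) :
    ∫⁻ x, u x ^ q ∂μ ≤ essSup u μ ^ (q - p) * ∫⁻ x, u x ^ p ∂μ := by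
  have hqp : 0 ≤ q - p := sub_nonneg.2 hpq
  calc ∫⁻ x, u x ^ q ∂μ = ∫⁻ x, u x ^ (q - p) * u x ^ p ∂μ := by
        simp_rw [← rpow_add_of_nonneg _ _ hqp hp, sub_add_cancel]
    _ ≤ ∫⁻ x, essSup u μ ^ (q - p) * u x ^ p ∂μ := by
        refine lintegral_mono_ae ((ae_le_essSup u).mono fun x hx => ?_)
        gcongr
    _ = essSup u μ ^ (q - p) * ∫⁻ x, u x ^ p ∂μ :=
        lintegral_const_mul' _ _ (rpow_ne_top_of_nonneg hqp hu)

theorem rpow_le_of_rpow_le_mul_rpow_sub {x K : ℝ≥0∞} {p q : ℝ} (hp : 0 < p) (hx : x ≠ ⊤)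
    (h : x ^ q ≤ K * x ^ (q - p)) : x ^ p ≤ K := by
  rcases eq_or_ne x 0 with rfl | hx0
  · simp [zero_rpow_of_pos hp]
  have hsplit : x ^ q = x ^ p * x ^ (q - p) := by rw [← rpow_add _ _ hx0 hx, add_sub_cancel]
  rwa [hsplit, ENNReal.mul_le_mul_iff_left (rpow_pos (pos_iff_ne_zero.2 hx0) hx).ne'
    (rpow_ne_top_of_ne_zero hx0 hx)] at h

theorem ofReal_two_mul_rpow_mul_rpow_le {y z C : ℝ≥0∞} {t ν p q : ℝ} (ht : 0 < t) (hp : 0 < p)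
    (hpq : p ≤ q) (h : y ^ q ≤ ENNReal.ofReal (t ^ (-ν)) * C * z ^ (q - p)) :
    (ENNReal.ofReal (2 * t) ^ (ν / p) * y) ^ q ≤
      2 ^ (q * ν / p) * C * (ENNReal.ofReal t ^ (ν / p) * z) ^ (q - p) := by
  set T := ENNReal.ofReal t
  have hT0 : T ≠ 0 := (ofReal_pos.2 ht).ne'
  have hq : 0 ≤ q := hp.le.trans hpq
  rw [← ofReal_rpow_of_pos ht] at h
  calc (ENNReal.ofReal (2 * t) ^ (ν / p) * y) ^ q
      = 2 ^ (q * ν / p) * T ^ (ν / p * q) * y ^ q := by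
        rw [ofReal_mul zero_le_two, ofReal_ofNat, mul_rpow_of_ne_top ofNat_ne_top ofReal_ne_top,
          mul_rpow_of_nonneg _ _ hq, mul_rpow_of_nonneg _ _ hq, ← rpow_mul, ← rpow_mul,
          show ν / p * q = q * ν / p by ring]
    _ ≤ 2 ^ (q * ν / p) * T ^ (ν / p * q) * (T ^ (-ν) * C * z ^ (q - p)) := by gcongr
    _ = 2 ^ (q * ν / p) * C * (T ^ (ν / p) * z) ^ (q - p) := by
        rw [mul_rpow_of_nonneg _ _ (sub_nonneg.2 hpq), ← rpow_mul,
          show ν / p * (q - p) = ν / p * q + -ν by field_simp; ring,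
          rpow_add _ _ hT0 ofReal_ne_top]
        ring

end ENNReal

theorem rpow_le_of_forall_rpow_le_mul_rpow_sub {G : ℝ → ℝ≥0∞} {a b ν p q : ℝ} {C M : ℝ≥0∞}
    (hab : a < b) (hν : 0 ≤ ν) (hp : 0 < p) (hpq : p ≤ q) (hM : M ≠ ⊤)
    (hGM : ∀ σ ∈ Ico a b, G σ ≤ M)
    (hG : ∀ σ' σ, a ≤ σ' → σ' < σ → σ ≤ b →
      G σ' ^ q ≤ ENNReal.ofReal ((σ - σ') ^ (-ν)) * C * G σ ^ (q - p)) :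
    G a ^ p ≤ ENNReal.ofReal (2 ^ (q * ν / p) * (b - a) ^ (-ν)) * C := by
  set w : ℝ → ℝ≥0∞ := fun σ => ENNReal.ofReal (b - σ) ^ (ν / p)
  set Ψ := ⨆ σ ∈ Ico a b, w σ * G σ
  have hΨ_top : Ψ ≠ ⊤ := by
    refine ne_top_of_le_ne_top (b := ENNReal.ofReal (b - a) ^ (ν / p) * M)
      (mul_ne_top (rpow_ne_top_of_nonneg (div_nonneg hν hp.le) ofReal_ne_top) hM)
      (iSup₂_le fun σ hσ => ?_)
    gcongr ENNReal.ofReal ?_ ^ _ * ?_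
    · linarith [hσ.1]
    · exact hGM σ hσ
  have hΨ : Ψ ^ q ≤ 2 ^ (q * ν / p) * C * Ψ ^ (q - p) := by
    have hq : 0 < q := hp.trans_le hpq
    rw [← le_rpow_inv_iff hq]
    refine iSup₂_le fun σ' hσ' => (le_rpow_inv_iff hq).2 ?_
    set σ := (σ' + b) / 2 with hσ_def
    have hσ : σ ∈ Ico a b := ⟨by linarith [hσ'.1, hσ'.2], by linarith [hσ'.2]⟩
    have hwσ' : w σ' = ENNReal.ofReal (2 * (b - σ)) ^ (ν / p) := by
      simp only [w, σ]; ring_nf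
    rw [hwσ']
    have hGσ := hG σ' σ hσ'.1 (by linarith [hσ'.2]) hσ.2.le
    rw [show σ - σ' = b - σ by linarith] at hGσ
    refine (ofReal_two_mul_rpow_mul_rpow_le (sub_pos.2 hσ.2) hp hpq hGσ).trans ?_
    gcongr
    exact le_iSup₂ (f := fun σ _ => w σ * G σ) σ hσ
  have hT0 : ENNReal.ofReal (b - a) ≠ 0 := (ofReal_pos.2 (sub_pos.2 hab)).ne'
  have hkey : ENNReal.ofReal (b - a) ^ ν * G a ^ p ≤ 2 ^ (q * ν / p) * C :=
    calc ENNReal.ofReal (b - a) ^ ν * G a ^ p = (w a * G a) ^ p := by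
          rw [mul_rpow_of_nonneg _ _ hp.le, ← rpow_mul, div_mul_cancel₀ ν hp.ne']
      _ ≤ Ψ ^ p := by
          gcongr
          exact le_iSup₂ (f := fun σ _ => w σ * G σ) a ⟨le_rfl, hab⟩
      _ ≤ 2 ^ (q * ν / p) * C := rpow_le_of_rpow_le_mul_rpow_sub hp hΨ_top hΨ
  calc G a ^ p = ENNReal.ofReal (b - a) ^ (-ν) * (ENNReal.ofReal (b - a) ^ ν * G a ^ p) := by
        rw [← mul_assoc, ← rpow_add _ _ hT0 ofReal_ne_top, neg_add_cancel, rpow_zero, one_mul]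
    _ ≤ ENNReal.ofReal (b - a) ^ (-ν) * (2 ^ (q * ν / p) * C) := by gcongr
    _ = ENNReal.ofReal (2 ^ (q * ν / p) * (b - a) ^ (-ν)) * C := by
        rw [ofReal_mul (by positivity), ← ofReal_rpow_of_pos two_pos,
          ← ofReal_rpow_of_pos (sub_pos.2 hab), ofReal_ofNat]
        ring

theorem mean_value_self_improvement_general {X : Type*} [MeasurableSpace X] (m : Measure X)
    (δ ν E p : ℝ) (hδ1 : δ < 1) (hν : 0 < ν)
    (hp0 : 0 < p) (hp2 : p < 2)
    (B : ℝ → Set X)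
    (hBmono : ∀ σ' σ : ℝ, δ ≤ σ' → σ' ≤ σ → σ ≤ 1 → B σ' ⊆ B σ)
    (u : X → ℝ≥0∞)
    (hbdd : essSup u (m.restrict (B 1)) < ⊤)
    (h : ∀ σ' σ : ℝ, δ ≤ σ' → σ' < σ → σ ≤ 1 →
      essSup (fun x => u x ^ (2 : ℝ)) (m.restrict (B σ')) ≤
        ENNReal.ofReal (E * (σ - σ') ^ (-ν)) * ∫⁻ x in B σ, u x ^ (2 : ℝ) ∂m) :
    essSup (fun x => u x ^ p) (m.restrict (B δ)) ≤
      ENNReal.ofReal ((2 : ℝ) ^ (2 * ν / p) * E * (1 - δ) ^ (-ν)) *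
        ∫⁻ x in B 1, u x ^ p ∂m := by
  set g : ℝ → ℝ≥0∞ := fun σ => essSup u (m.restrict (B σ))
  set I := ∫⁻ x in B 1, u x ^ p ∂m
  have hg_le : ∀ σ ∈ Icc δ 1, g σ ≤ g 1 := fun σ hσ =>
    essSup_mono_measure' (Measure.restrict_mono (hBmono σ 1 hσ.1 hσ.2 le_rfl) le_rfl)
  have hstep : ∀ σ' σ, δ ≤ σ' → σ' < σ → σ ≤ 1 →
      g σ' ^ (2 : ℝ) ≤ ENNReal.ofReal ((σ - σ') ^ (-ν)) * (ENNReal.ofReal E * I) *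
        g σ ^ (2 - p) := by
    intro σ' σ hδσ' hσ'σ hσ1
    have hδσ : δ ≤ σ := hδσ'.trans hσ'σ.le
    calc g σ' ^ (2 : ℝ) = essSup (fun x => u x ^ (2 : ℝ)) (m.restrict (B σ')) :=
          (essSup_rpow u two_pos).symm
      _ ≤ ENNReal.ofReal (E * (σ - σ') ^ (-ν)) * ∫⁻ x in B σ, u x ^ (2 : ℝ) ∂m :=
          h σ' σ hδσ' hσ'σ hσ1
      _ ≤ ENNReal.ofReal (E * (σ - σ') ^ (-ν)) * (g σ ^ (2 - p) * I) := by
          gcongr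
          refine (lintegral_rpow_le_essSup_rpow_mul hp0.le hp2.le
            ((hg_le σ ⟨hδσ, hσ1⟩).trans_lt hbdd).ne).trans ?_
          gcongr
          exact lintegral_mono_set (hBmono σ 1 hδσ hσ1 le_rfl)
      _ = _ := by
          rw [mul_comm E, ofReal_mul (Real.rpow_nonneg (sub_nonneg.2 hσ'σ.le) _)]
          ring
  rw [essSup_rpow u hp0]
  calc g δ ^ p ≤ ENNReal.ofReal (2 ^ (2 * ν / p) * (1 - δ) ^ (-ν)) * (ENNReal.ofReal E * I) :=
        rpow_le_of_forall_rpow_le_mul_rpow_sub hδ1 hν.le hp0 hp2.le hbdd.ne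
          (fun σ hσ => hg_le σ (Ico_subset_Icc_self hσ)) hstep
    _ = _ := by
        rw [mul_right_comm ((2 : ℝ) ^ (2 * ν / p)) E,
          ofReal_mul (p := 2 ^ (2 * ν / p) * (1 - δ) ^ (-ν)) (by positivity)]
        ring

/-- Self-improvement of the `L²` mean value inequality to all exponents `p ∈ (0,2)`
(second half of the proof of Theorem 4.3 of the paper): if a nonnegative measurable
function `u`, essentially bounded on `B_1`, satisfies
`ess sup_{B_{σ'}} u² ≤ E (σ-σ')^{-ν} ∫_{B_σ} u²` for all `δ ≤ σ' < σ ≤ 1` over the nested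
sets `B_σ`, then `ess sup_{B_δ} u^p ≤ 2^{2ν/p} E (1-δ)^{-ν} ∫_{B_1} u^p`. -/
theorem mean_value_self_improvement {X : Type*} [MeasurableSpace X] (m : Measure X)
    (δ ν E p : ℝ) (hδ0 : 0 < δ) (hδ1 : δ < 1) (hν : 0 < ν) (hE : 0 < E)
    (hp0 : 0 < p) (hp2 : p < 2)
    (B : ℝ → Set X) (hBmeas : ∀ σ ∈ Set.Icc δ (1 : ℝ), MeasurableSet (B σ))
    (hBmono : ∀ σ' σ : ℝ, δ ≤ σ' → σ' ≤ σ → σ ≤ 1 → B σ' ⊆ B σ)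
    (u : X → ℝ≥0∞) (hu : Measurable u)
    (hbdd : essSup u (m.restrict (B 1)) < ⊤)
    (h : ∀ σ' σ : ℝ, δ ≤ σ' → σ' < σ → σ ≤ 1 →
      essSup (fun x => u x ^ (2 : ℝ)) (m.restrict (B σ')) ≤
        ENNReal.ofReal (E * (σ - σ') ^ (-ν)) * ∫⁻ x in B σ, u x ^ (2 : ℝ) ∂m) :
    essSup (fun x => u x ^ p) (m.restrict (B δ)) ≤
      ENNReal.ofReal ((2 : ℝ) ^ (2 * ν / p) * E * (1 - δ) ^ (-ν)) *
        ∫⁻ x in B 1, u x ^ p ∂m :=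
  mean_value_self_improvement_general m δ ν E p hδ1 hν hp0 hp2 B hBmono u hbdd h
end
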